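/- Let R be a finite reduced crystallographic irreducible root system with a fixed base S of simple roots, and let I' ⊊ I ⊊ S be subsets. Then the strict inequality ∑_{α ∈ S \ I} ∑_{β ∈ R⁺ \ R_{I'}} ⟨β, α∨⟩ < ∑_{α ∈ S \ I} ∑_{β ∈ R⁺ \ R_I} ⟨β, α∨⟩ holds. -/

import Mathlib

open scoped RealInnerProductSpace Classical

noncomputable section

/-- The crystallographic pairing `⟨β, α∨⟩ = 2(β,α)/(α,α)`. -/
def cpair {V : Type*} [NormedAddCommGroup V] [InnerProductSpace ℝ V] (β α : V) : ℝ :=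
  2 * ⟪β, α⟫ / ⟪α, α⟫

/-- A finite reduced crystallographic root system `R` in a real inner product space,
together with a fixed base `S` of simple roots. -/
structure RootSystemWithBase (V : Type*) [NormedAddCommGroup V] [InnerProductSpace ℝ V] where
  /-- The (finite) set of roots. -/
  R : Finset V
  /-- The base of simple roots. -/
  S : Finset V
  S_subset : S ⊆ R
  zero_not_mem : (0 : V) ∉ R
  /-- `R` is stable under the reflection associated to each root. -/
  reflect_mem : ∀ α ∈ R, ∀ β ∈ R, β - cpair β α • α ∈ R
  /-- The root system is crystallographic: all pairings are integers. -/
  crystallographic : ∀ α ∈ R, ∀ β ∈ R, ∃ n : ℤ, cpair β α = (n : ℝ)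
  /-- The root system is reduced: the only multiples of a root that are roots are `±` itself. -/
  reduced : ∀ α ∈ R, ∀ t : ℝ, t • α ∈ R → t = 1 ∨ t = -1
  /-- The simple roots are linearly independent. -/
  indep : LinearIndependent ℝ (fun s : S => (s : V))
  /-- Every root is a nonnegative or nonpositive integer combination of simple roots. -/
  base_expand : ∀ β ∈ R, β ∈ AddSubmonoid.closure (S : Set V) ∨
    -β ∈ AddSubmonoid.closure (S : Set V)

namespace RootSystemWithBase

variable {V : Type*} [NormedAddCommGroup V] [InnerProductSpace ℝ V]

/-- The positive roots `R⁺` determined by the base `S`. -/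
def posRoots (P : RootSystemWithBase V) : Finset V :=
  P.R.filter (fun β => β ∈ AddSubmonoid.closure (P.S : Set V))

/-- For `I ⊆ S`, the set `R_I` of roots lying in the `ℤ`-span of `I`. -/
def rootsIn (P : RootSystemWithBase V) (I : Finset V) : Finset V :=
  P.R.filter (fun β => β ∈ Submodule.span ℤ (I : Set V))

/-- The root system is irreducible: it is not the orthogonal direct sum of two nonempty
root subsystems (equivalently, its Dynkin diagram is connected). -/
def IsIrreducible (P : RootSystemWithBase V) : Prop :=
  ∀ R₁ R₂ : Finset V, R₁ ∪ R₂ = P.R → R₁.Nonempty → R₂.Nonempty →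
    (∀ a ∈ R₁, ∀ b ∈ R₂, ⟪a, b⟫ = 0) → False

end RootSystemWithBase

open RootSystemWithBase

/-!
For `α ∈ S \ I` the two sides differ by the sum of `⟨β, α∨⟩` over the positive roots
`β ∈ R_I \ R_{I'}`. Such a `β` is a nonnegative combination of `I ∌ α`, and distinct simple roots
have nonpositive inner product, so every term is `≤ 0`. For strictness take `δ ∈ I \ I'`: since
the Dynkin diagram is connected, adding adjacent simple roots of `I` to a positive root of `R_I`
that involves `δ` eventually produces a root `β` with `⟪β, α⟫ < 0` for some `α ∈ S \ I`.
Connectedness is irreducibility: if `S` splits into two orthogonal parts, induction on the height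
puts every root into the span of one of them.
-/

open Submodule

section Pairing

variable {V : Type*} [NormedAddCommGroup V] [InnerProductSpace ℝ V] {α β : V}

theorem cpair_self (hβ : β ≠ 0) : cpair β β = 2 := by
  have : ⟪β, β⟫ ≠ 0 := inner_self_ne_zero.2 hβ
  unfold cpair
  field_simp

theorem cpair_pos_of_inner_pos (h : 0 < ⟪β, α⟫) : 0 < cpair β α := by
  have hα : α ≠ 0 := by rintro rfl; simp at h
  exact div_pos (by linarith) (real_inner_self_pos.2 hα)

theorem cpair_neg_of_inner_neg (h : ⟪β, α⟫ < 0) : cpair β α < 0 := by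
  have hα : α ≠ 0 := by rintro rfl; simp at h
  exact div_neg_of_neg_of_pos (by linarith) (real_inner_self_pos.2 hα)

theorem cpair_nonpos_of_inner_nonpos (h : ⟪β, α⟫ ≤ 0) : cpair β α ≤ 0 :=
  div_nonpos_of_nonpos_of_nonneg (by linarith) real_inner_self_nonneg

theorem cpair_mul_cpair_lt_four (h : |⟪β, α⟫| < ‖β‖ * ‖α‖) : cpair β α * cpair α β < 4 := by
  have hβ : β ≠ 0 := by rintro rfl; simp at h
  have hα : α ≠ 0 := by rintro rfl; simp at h
  have hsq : ⟪β, α⟫ ^ 2 < (‖β‖ * ‖α‖) ^ 2 := sq_lt_sq' (by linarith [neg_abs_le ⟪β, α⟫])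
    (by linarith [le_abs_self ⟪β, α⟫])
  have hnorm : 0 < (‖β‖ * ‖α‖) ^ 2 := by positivity
  have : cpair β α * cpair α β = 4 * (⟪β, α⟫ ^ 2 / (‖β‖ * ‖α‖) ^ 2) := by
    unfold cpair
    rw [real_inner_self_eq_norm_sq, real_inner_self_eq_norm_sq, real_inner_comm α β]
    field_simp
    ring
  rw [this]
  nlinarith [(div_lt_one hnorm).2 hsq]

end Pairing

namespace RootSystemWithBase

variable {V : Type*} [NormedAddCommGroup V] [InnerProductSpace ℝ V] (P : RootSystemWithBase V)
  {α β γ : V}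

theorem ne_zero_of_mem (hβ : β ∈ P.R) : β ≠ 0 :=
  ne_of_mem_of_not_mem hβ P.zero_not_mem

theorem neg_mem (hβ : β ∈ P.R) : -β ∈ P.R := by
  simpa [cpair_self (P.ne_zero_of_mem hβ), two_smul] using P.reflect_mem β hβ β hβ

theorem sub_mem_of_inner_pos (hβ : β ∈ P.R) (hγ : γ ∈ P.R) (hne : β ≠ γ)
    (hpos : 0 < ⟪β, γ⟫) : β - γ ∈ P.R := by
  have hγ0 := P.ne_zero_of_mem hγ
  -- strict Cauchy–Schwarz: by reducedness `β` is not a positive multiple of `γ`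
  have hlt : ⟪β, γ⟫ < ‖β‖ * ‖γ‖ := by
    rw [inner_lt_norm_mul_iff_real]
    intro h
    have hprop : (‖β‖ / ‖γ‖) • γ = β := by
      rw [div_eq_inv_mul, mul_smul, ← h, inv_smul_smul₀ (norm_ne_zero_iff.2 hγ0)]
    rcases P.reduced γ hγ _ (hprop ▸ hβ) with h1 | h1
    · exact hne (by rw [← hprop, h1, one_smul])
    · have : 0 ≤ ‖β‖ / ‖γ‖ := by positivity
      linarith
  obtain ⟨m, hm⟩ := P.crystallographic γ hγ β hβ
  obtain ⟨n, hn⟩ := P.crystallographic β hβ γ hγ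
  have hm0 : (0 : ℝ) < m := hm ▸ cpair_pos_of_inner_pos hpos
  have hn0 : (0 : ℝ) < n := hn ▸ cpair_pos_of_inner_pos (real_inner_comm β γ ▸ hpos)
  have hmn : (m : ℝ) * n < 4 := hm ▸ hn ▸ cpair_mul_cpair_lt_four (by rwa [abs_of_pos hpos])
  have : m = 1 ∨ n = 1 := by
    have hm1 : 1 ≤ m := by exact_mod_cast hm0
    have hn1 : 1 ≤ n := by exact_mod_cast hn0
    have : m * n < 4 := by exact_mod_cast hmn
    by_contra! h
    nlinarith [lt_of_le_of_ne hm1 (Ne.symm h.1), lt_of_le_of_ne hn1 (Ne.symm h.2)]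
  rcases this with rfl | rfl
  · simpa [hm] using P.reflect_mem γ hγ β hβ
  · simpa [hn] using P.neg_mem (P.reflect_mem β hβ γ hγ)

/-- Coordinates with respect to an extension of the linearly independent set `S` to a basis of
`V`; only `coord s` for `s ∈ S` is meaningful. -/
def coord (s : V) : V →ₗ[ℝ] ℝ :=
  Finsupp.lapply s ∘ₗ Finsupp.lmapDomain ℝ ℝ Subtype.val ∘ₗ
    (Module.Basis.extend (P.indep : LinearIndepOn ℝ id (P.S : Set V))).repr.toLinearMap

theorem coord_apply_of_mem {s t : V} (ht : t ∈ P.S) :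
    P.coord s t = if t = s then 1 else 0 := by
  have hli : LinearIndepOn ℝ id (P.S : Set V) := P.indep
  have := (Module.Basis.extend hli).repr_self ⟨t, Module.Basis.subset_extend hli ht⟩
  rw [Module.Basis.extend_apply_self] at this
  simp [coord, this, Finsupp.single_apply]

theorem coord_self {s : V} (hs : s ∈ P.S) : P.coord s s = 1 := by
  simp [P.coord_apply_of_mem hs]

theorem coord_of_ne {s t : V} (ht : t ∈ P.S) (h : t ≠ s) : P.coord s t = 0 := by
  simp [P.coord_apply_of_mem ht, h]

theorem sum_coord_smul {x : V} (hx : x ∈ span ℝ (P.S : Set V)) :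
    ∑ s ∈ P.S, P.coord s x • s = x := by
  let f : V →ₗ[ℝ] V := ∑ s ∈ P.S, (P.coord s).smulRight s
  have hf : Set.EqOn f (LinearMap.id : V →ₗ[ℝ] V) (P.S : Set V) := by
    intro t ht
    simp only [f, LinearMap.sum_apply, LinearMap.smulRight_apply,
      LinearMap.id_apply]
    rw [Finset.sum_eq_single_of_mem t ht fun s _ hst => by rw [P.coord_of_ne ht hst.symm,
      zero_smul], P.coord_self ht, one_smul]
  simpa [f] using LinearMap.eqOn_span' hf hx

theorem inner_eq_sum_coord_mul {x : V} (hx : x ∈ span ℝ (P.S : Set V)) (y : V) :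
    ⟪x, y⟫ = ∑ s ∈ P.S, P.coord s x * ⟪s, y⟫ := by
  conv_lhs => rw [← P.sum_coord_smul hx]
  simp only [sum_inner, real_inner_smul_left]

theorem coord_eq_zero_of_mem_span {T : Finset V} (hT : T ⊆ P.S) {s x : V} (hs : s ∉ T)
    (hx : x ∈ span ℝ (T : Set V)) : P.coord s x = 0 := by
  have : span ℝ (T : Set V) ≤ LinearMap.ker (P.coord s) := span_le.2 fun t ht =>
    P.coord_of_ne (hT ht) (ne_of_mem_of_not_mem ht hs)
  exact this hx

def posCone : AddSubmonoid V := AddSubmonoid.closure (P.S : Set V)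

theorem mem_posRoots : β ∈ P.posRoots ↔ β ∈ P.R ∧ β ∈ P.posCone := Finset.mem_filter

theorem mem_rootsIn {I : Finset V} : β ∈ P.rootsIn I ↔ β ∈ P.R ∧ β ∈ span ℤ (I : Set V) :=
  Finset.mem_filter

theorem rootsIn_mono {I' I : Finset V} (h : I' ⊆ I) : P.rootsIn I' ⊆ P.rootsIn I :=
  Finset.monotone_filter_right _ fun _ _ hx => span_mono (Finset.coe_subset.2 h) hx

theorem mem_span_of_mem_posCone {x : V} (hx : x ∈ P.posCone) : x ∈ span ℝ (P.S : Set V) :=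
  closure_subset_span hx

theorem coord_nonneg {s x : V} (hx : x ∈ P.posCone) : 0 ≤ P.coord s x := by
  induction hx using AddSubmonoid.closure_induction with
  | mem t ht => rw [P.coord_apply_of_mem ht]; split_ifs <;> norm_num
  | zero => simp
  | add x y _ _ hx hy => rw [map_add]; exact add_nonneg hx hy

def height : V →ₗ[ℝ] ℝ := ∑ s ∈ P.S, P.coord s

theorem height_of_mem {s : V} (hs : s ∈ P.S) : P.height s = 1 := by
  simp only [height, LinearMap.sum_apply]
  rw [Finset.sum_eq_single_of_mem s hs fun t _ hts => P.coord_of_ne hs hts.symm, P.coord_self hs]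

theorem one_le_height {x : V} (hx : x ∈ P.posCone) (hx0 : x ≠ 0) : 1 ≤ P.height x := by
  suffices x = 0 ∨ 1 ≤ P.height x from this.resolve_left hx0
  clear hx0
  induction hx using AddSubmonoid.closure_induction with
  | mem s hs => exact Or.inr (P.height_of_mem hs).ge
  | zero => exact Or.inl rfl
  | add x y _ _ hx hy =>
    rcases hx with rfl | hx
    · simpa using hy
    rcases hy with rfl | hy
    · simpa using Or.inr hx
    exact Or.inr (by rw [map_add]; linarith)

theorem eq_zero_or_eq_of_sub_mem_posCone {s x : V} (hs : s ∈ P.S) (hx : x ∈ P.posCone)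
    (hsx : s - x ∈ P.posCone) : x = 0 ∨ x = s := by
  by_contra! h
  have h1 := P.one_le_height hx h.1
  have h2 := P.one_le_height hsx (sub_ne_zero.2 h.2.symm)
  rw [map_sub, P.height_of_mem hs] at h2
  linarith

theorem exists_inner_pos {x : V} (hx : x ∈ P.posCone) (hx0 : x ≠ 0) :
    ∃ s ∈ P.S, 0 < ⟪x, s⟫ := by
  have hsum : ∑ s ∈ P.S, (0 : ℝ) < ∑ s ∈ P.S, P.coord s x * ⟪s, x⟫ := by
    rw [Finset.sum_const_zero, ← P.inner_eq_sum_coord_mul (P.mem_span_of_mem_posCone hx)]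
    exact real_inner_self_pos.2 hx0
  obtain ⟨s, hs, hpos⟩ := Finset.exists_lt_of_sum_lt hsum
  exact ⟨s, hs, real_inner_comm x s ▸ pos_of_mul_pos_right hpos (P.coord_nonneg hx)⟩

theorem inner_nonpos_of_ne (hα : α ∈ P.S) (hγ : γ ∈ P.S) (hne : α ≠ γ) : ⟪α, γ⟫ ≤ 0 := by
  by_contra! hpos
  -- otherwise `α - γ` would be a nonzero root of height `0`
  have hsub := P.sub_mem_of_inner_pos (P.S_subset hα) (P.S_subset hγ) hne hpos
  have h0 : P.height (α - γ) = 0 := by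
    rw [map_sub, P.height_of_mem hα, P.height_of_mem hγ, sub_self]
  rcases P.base_expand _ hsub with h | h
  · linarith [P.one_le_height h (sub_ne_zero.2 hne)]
  · linarith [map_neg P.height (α - γ), P.one_le_height h (neg_ne_zero.2 (sub_ne_zero.2 hne))]

theorem coord_mul_inner_nonpos {s u x : V} (hx : x ∈ P.posCone) (hs : s ∈ P.S) (hu : u ∈ P.S)
    (hxu : P.coord u x = 0) : P.coord s x * ⟪s, u⟫ ≤ 0 := by
  rcases eq_or_ne s u with rfl | hsu
  · simp [hxu]
  · exact mul_nonpos_of_nonneg_of_nonpos (P.coord_nonneg hx) (P.inner_nonpos_of_ne hs hu hsu)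

theorem inner_nonpos_of_coord_eq_zero {u x : V} (hx : x ∈ P.posCone) (hu : u ∈ P.S)
    (hxu : P.coord u x = 0) : ⟪x, u⟫ ≤ 0 := by
  rw [P.inner_eq_sum_coord_mul (P.mem_span_of_mem_posCone hx)]
  exact Finset.sum_nonpos fun s hs => P.coord_mul_inner_nonpos hx hs hu hxu

theorem inner_neg_of_coord_eq_zero {s u x : V} (hx : x ∈ P.posCone) (hs : s ∈ P.S) (hu : u ∈ P.S)
    (hxu : P.coord u x = 0) (hxs : P.coord s x ≠ 0) (hsu : ⟪s, u⟫ < 0) : ⟪x, u⟫ < 0 := by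
  rw [P.inner_eq_sum_coord_mul (P.mem_span_of_mem_posCone hx)]
  refine Finset.sum_neg' (fun t ht => P.coord_mul_inner_nonpos hx ht hu hxu) ⟨s, hs, ?_⟩
  exact mul_neg_of_pos_of_neg ((P.coord_nonneg hx).lt_of_ne' hxs) hsu

theorem exists_sub_mem_posCone (hβ : β ∈ P.R) (hpos : β ∈ P.posCone) (hβS : β ∉ P.S) :
    ∃ γ ∈ P.S, β - γ ∈ P.R ∧ β - γ ∈ P.posCone := by
  obtain ⟨γ, hγ, hβγ⟩ := P.exists_inner_pos hpos (P.ne_zero_of_mem hβ)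
  have hne : β ≠ γ := fun h => hβS (h ▸ hγ)
  have hsub := P.sub_mem_of_inner_pos hβ (P.S_subset hγ) hne hβγ
  refine ⟨γ, hγ, hsub, (P.base_expand _ hsub).resolve_right fun h => ?_⟩
  rw [neg_sub] at h
  rcases P.eq_zero_or_eq_of_sub_mem_posCone hγ hpos h with h0 | h0
  · exact P.ne_zero_of_mem hβ h0
  · exact hne h0

theorem add_notMem_of_mem_span {T : Finset V} (hT : T ⊆ P.S) {q : V} (hq : q ∈ P.R)
    (hqpos : q ∈ P.posCone) (hqT : q ∈ span ℝ (T : Set V)) (hγ : γ ∈ P.S) (hγT : γ ∉ T)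
    (horth : ∀ t ∈ T, ⟪t, γ⟫ = 0) : q + γ ∉ P.R := by
  intro hsum
  -- `q ⊥ γ`, so reflecting `q + γ` in `γ` gives the root `q - γ`, whose coordinates have
  -- both signs
  have hqγ : ⟪q, γ⟫ = 0 :=
    (isOrtho_span.2 fun t ht u hu => (Set.mem_singleton_iff.1 hu) ▸ horth t ht).inner_eq hqT
      (subset_span rfl)
  have hcpair : cpair (q + γ) γ = 2 := by
    rw [cpair, inner_add_left, hqγ, zero_add]
    exact cpair_self (P.ne_zero_of_mem (P.S_subset hγ))
  have hrefl : q - γ ∈ P.R := by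
    simpa [hcpair, two_smul] using P.reflect_mem γ (P.S_subset hγ) _ hsum
  have hcoord : P.coord γ q = 0 := P.coord_eq_zero_of_mem_span hT hγT hqT
  rcases P.base_expand _ hrefl with h | h
  · have := P.coord_nonneg (s := γ) h
    rw [map_sub, hcoord, P.coord_self hγ] at this
    norm_num at this
  · rw [neg_sub] at h
    rcases P.eq_zero_or_eq_of_sub_mem_posCone hγ hqpos h with h0 | rfl
    · exact P.ne_zero_of_mem hq h0
    · simp [P.coord_self hγ] at hcoord

theorem mem_span_or_mem_span_sdiff_of_height_le {T : Finset V} (hT : T ⊆ P.S)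
    (horth : ∀ a ∈ T, ∀ b ∈ P.S \ T, ⟪a, b⟫ = 0) (n : ℕ) (hβ : β ∈ P.R) (hpos : β ∈ P.posCone)
    (hle : P.height β ≤ n) :
    β ∈ span ℝ (T : Set V) ∨ β ∈ span ℝ ((P.S \ T : Finset V) : Set V) := by
  induction n generalizing β with
  | zero =>
    push_cast at hle
    linarith [P.one_le_height hpos (P.ne_zero_of_mem hβ)]
  | succ n ih =>
    by_cases hβS : β ∈ P.S
    · by_cases hβT : β ∈ T
      · exact Or.inl (subset_span hβT)
      · exact Or.inr (subset_span (Finset.mem_sdiff.2 ⟨hβS, hβT⟩))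
    obtain ⟨γ, hγ, hsub, hsubpos⟩ := P.exists_sub_mem_posCone hβ hpos hβS
    have hle' : P.height (β - γ) ≤ n := by
      rw [map_sub, P.height_of_mem hγ]
      push_cast at hle
      linarith
    have hβ' : β - γ + γ ∈ P.R := by rwa [sub_add_cancel]
    rw [← sub_add_cancel β γ]
    rcases ih hsub hsubpos hle' with h | h <;> by_cases hγT : γ ∈ T
    · exact Or.inl (add_mem h (subset_span hγT))
    · exact (P.add_notMem_of_mem_span hT hsub hsubpos h hγ hγT
        (fun t ht => horth t ht γ (Finset.mem_sdiff.2 ⟨hγ, hγT⟩)) hβ').elim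
    · exact (P.add_notMem_of_mem_span Finset.sdiff_subset hsub hsubpos h hγ
        (fun h' => (Finset.mem_sdiff.1 h').2 hγT)
        (fun t ht => (real_inner_comm γ t).trans (horth γ hγT t ht)) hβ').elim
    · exact Or.inr (add_mem h (subset_span (Finset.mem_sdiff.2 ⟨hγ, hγT⟩)))

theorem mem_span_or_mem_span_sdiff {T : Finset V} (hT : T ⊆ P.S)
    (horth : ∀ a ∈ T, ∀ b ∈ P.S \ T, ⟪a, b⟫ = 0) (hβ : β ∈ P.R) :
    β ∈ span ℝ (T : Set V) ∨ β ∈ span ℝ ((P.S \ T : Finset V) : Set V) := by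
  rcases P.base_expand β hβ with h | h
  · exact P.mem_span_or_mem_span_sdiff_of_height_le hT horth _ hβ h (Nat.le_ceil _)
  · simpa only [neg_mem_iff] using
      P.mem_span_or_mem_span_sdiff_of_height_le hT horth _ (P.neg_mem hβ) h (Nat.le_ceil _)

theorem exists_inner_ne_zero_of_isIrreducible (hirr : P.IsIrreducible) {J : Finset V}
    (hJ : J ⊆ P.S) {δ : V} (hδ : δ ∈ J) (hα : α ∈ P.S) (hαJ : α ∉ J) :
    ∃ s ∈ J, ∃ u ∈ P.S \ J, ⟪s, u⟫ ≠ 0 := by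
  by_contra! horth
  have hortho : span ℝ (J : Set V) ⟂ span ℝ ((P.S \ J : Finset V) : Set V) :=
    isOrtho_span.2 fun a ha b hb => horth a ha b hb
  have hαspan : α ∉ span ℝ (J : Set V) := fun h => by
    simpa [P.coord_self hα] using P.coord_eq_zero_of_mem_span hJ hαJ h
  refine hirr (P.R.filter (· ∈ span ℝ (J : Set V))) (P.R.filter (· ∉ span ℝ (J : Set V)))
    (Finset.filter_union_filter_not_eq _ _)
    ⟨δ, Finset.mem_filter.2 ⟨P.S_subset (hJ hδ), subset_span hδ⟩⟩
    ⟨α, Finset.mem_filter.2 ⟨P.S_subset hα, hαspan⟩⟩ fun a ha b hb => ?_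
  rw [Finset.mem_filter] at ha hb
  exact hortho.inner_eq ha.2 ((P.mem_span_or_mem_span_sdiff hJ horth hb.1).resolve_left hb.2)

theorem add_mem_of_inner_neg {u : V} (hβ : β ∈ P.R) (hu : u ∈ P.S) (hβu : P.coord u β = 0)
    (hneg : ⟪β, u⟫ < 0) : β + u ∈ P.R := by
  have hne : β ≠ -u := fun h => by simp [h, P.coord_self hu] at hβu
  simpa using P.sub_mem_of_inner_pos hβ (P.neg_mem (P.S_subset hu)) hne
    (by rwa [inner_neg_right, neg_pos])

theorem exists_mem_closure_inner_neg (hirr : P.IsIrreducible) {I : Finset V} (hI : I ⊆ P.S)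
    {δ : V} (hδ : δ ∈ I) (hα : α ∈ P.S) (hαI : α ∉ I) :
    ∃ β ∈ P.R, β ∈ AddSubmonoid.closure (I : Set V) ∧ P.coord δ β ≠ 0 ∧
      ∃ u ∈ P.S \ I, ⟪β, u⟫ < 0 := by
  by_contra! hno
  have hcone : AddSubmonoid.closure (I : Set V) ≤ P.posCone :=
    AddSubmonoid.closure_mono (Finset.coe_subset.2 hI)
  -- If no such root pairs negatively with `S \ I`, the simple roots occurring in these roots
  -- form a part `J` of the Dynkin diagram with no edge to `S \ J`: adding a neighbour `u ∈ I`
  -- to such a root gives another one.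
  let J := P.S.filter fun s => ∃ β ∈ P.R, β ∈ AddSubmonoid.closure (I : Set V) ∧
    P.coord δ β ≠ 0 ∧ P.coord s β ≠ 0
  have hδJ : δ ∈ J := by
    have : P.coord δ δ ≠ 0 := by simp [P.coord_self (hI hδ)]
    exact Finset.mem_filter.2 ⟨hI hδ, δ, P.S_subset (hI hδ),
      AddSubmonoid.subset_closure hδ, this, this⟩
  have hJI : J ⊆ I := fun s hs => by
    obtain ⟨-, β, -, hβI, -, hβs⟩ := Finset.mem_filter.1 hs
    by_contra hsI
    exact hβs (P.coord_eq_zero_of_mem_span hI hsI (closure_subset_span hβI))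
  obtain ⟨s, hsJ, u, hu, hsu⟩ := P.exists_inner_ne_zero_of_isIrreducible hirr
    (Finset.filter_subset _ _) hδJ hα fun h => hαI (hJI h)
  obtain ⟨huS, huJ⟩ := Finset.mem_sdiff.1 hu
  obtain ⟨hsS, β, hβR, hβI, hβδ, hβs⟩ := Finset.mem_filter.1 hsJ
  have hβu : P.coord u β = 0 := by
    by_contra h
    exact huJ (Finset.mem_filter.2 ⟨huS, β, hβR, hβI, hβδ, h⟩)
  have hneg : ⟪β, u⟫ < 0 := P.inner_neg_of_coord_eq_zero (hcone hβI) hsS huS hβu hβs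
    ((P.inner_nonpos_of_ne hsS huS (ne_of_mem_of_not_mem hsJ huJ)).lt_of_ne hsu)
  by_cases huI : u ∈ I
  · have hβu' := P.add_mem_of_inner_neg hβR huS hβu hneg
    have hδu : P.coord δ u = 0 := P.coord_of_ne huS (ne_of_mem_of_not_mem hδJ huJ).symm
    refine huJ (Finset.mem_filter.2 ⟨huS, β + u, hβu',
      add_mem hβI (AddSubmonoid.subset_closure huI), ?_, ?_⟩)
    · rwa [map_add, hδu, add_zero]
    · simp [hβu, P.coord_self huS]
  · exact (hno β hβR hβI hβδ u (Finset.mem_sdiff.2 ⟨huS, huI⟩)).not_gt hneg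

theorem exists_mem_rootsIn_sdiff_inner_neg (hirr : P.IsIrreducible) {I' I : Finset V}
    (h1 : I' ⊂ I) (h2 : I ⊂ P.S) :
    ∃ β ∈ (P.posRoots ∩ P.rootsIn I) \ P.rootsIn I', ∃ α ∈ P.S \ I, ⟪β, α⟫ < 0 := by
  obtain ⟨δ, hδI, hδI'⟩ := Finset.exists_of_ssubset h1
  obtain ⟨α, hα, hαI⟩ := Finset.exists_of_ssubset h2
  obtain ⟨β, hβR, hβI, hβδ, hneg⟩ := P.exists_mem_closure_inner_neg hirr h2.subset hδI hα hαI
  refine ⟨β, Finset.mem_sdiff.2 ⟨Finset.mem_inter.2 ⟨P.mem_posRoots.2 ⟨hβR, ?_⟩,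
    P.mem_rootsIn.2 ⟨hβR, closure_subset_span hβI⟩⟩, fun h => hβδ ?_⟩, hneg⟩
  · exact AddSubmonoid.closure_mono (Finset.coe_subset.2 h2.subset) hβI
  · exact P.coord_eq_zero_of_mem_span (h1.subset.trans h2.subset) hδI'
      (span_le_restrictScalars ℤ ℝ _ (P.mem_rootsIn.1 h).2)

theorem cpair_nonpos_of_mem_rootsIn {I : Finset V} (hI : I ⊆ P.S)
    (hβ : β ∈ P.posRoots ∩ P.rootsIn I) (hα : α ∈ P.S \ I) : cpair β α ≤ 0 := by
  obtain ⟨hβ, hβI⟩ := Finset.mem_inter.1 hβ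
  obtain ⟨hαS, hαI⟩ := Finset.mem_sdiff.1 hα
  refine cpair_nonpos_of_inner_nonpos
    (P.inner_nonpos_of_coord_eq_zero (P.mem_posRoots.1 hβ).2 hαS ?_)
  exact P.coord_eq_zero_of_mem_span hI hαI
    (span_le_restrictScalars ℤ ℝ _ (P.mem_rootsIn.1 hβI).2)

end RootSystemWithBase

/-- If `I' ⊊ I ⊊ S`, then
`∑_{α ∈ S \ I} ∑_{β ∈ R⁺ \ R_{I'}} ⟨β, α∨⟩ < ∑_{α ∈ S \ I} ∑_{β ∈ R⁺ \ R_I} ⟨β, α∨⟩`. -/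
theorem coefficient_sum_strict_monotonicity {V : Type*} [NormedAddCommGroup V]
    [InnerProductSpace ℝ V] (P : RootSystemWithBase V) (hirr : P.IsIrreducible)
    (I' I : Finset V) (h1 : I' ⊂ I) (h2 : I ⊂ P.S) :
    ∑ α ∈ P.S \ I, ∑ β ∈ P.posRoots \ P.rootsIn I', cpair β α
      < ∑ α ∈ P.S \ I, ∑ β ∈ P.posRoots \ P.rootsIn I, cpair β α := by
  obtain ⟨β₀, hβ₀, α₀, hα₀, hneg⟩ := P.exists_mem_rootsIn_sdiff_inner_neg hirr h1 h2
  have hsub : P.posRoots \ P.rootsIn I ⊆ P.posRoots \ P.rootsIn I' :=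
    Finset.sdiff_subset_sdiff le_rfl (P.rootsIn_mono h1.subset)
  have hdiff : (P.posRoots \ P.rootsIn I') \ (P.posRoots \ P.rootsIn I)
      = (P.posRoots ∩ P.rootsIn I) \ P.rootsIn I' := by
    ext β
    simp only [Finset.mem_sdiff, Finset.mem_inter]
    tauto
  have hle : ∀ β ∈ (P.posRoots ∩ P.rootsIn I) \ P.rootsIn I', ∀ α ∈ P.S \ I, cpair β α ≤ 0 :=
    fun β hβ α hα => P.cpair_nonpos_of_mem_rootsIn h2.subset (Finset.mem_sdiff.1 hβ).1 hα
  rw [Finset.sum_comm, Finset.sum_comm (s := P.S \ I), ← Finset.sum_sdiff hsub, hdiff]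
  refine add_lt_of_neg_left _ (Finset.sum_neg' (fun β hβ => Finset.sum_nonpos (hle β hβ)) ?_)
  exact ⟨β₀, hβ₀, Finset.sum_neg' (hle β₀ hβ₀) ⟨α₀, hα₀, cpair_neg_of_inner_neg hneg⟩⟩
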